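/- Let u be a nonempty word of length m and let k ≥ 2. Then the word u^k (the k-fold concatenation of u, of length n = km) contains at most k·m^2 = n^2/k distinct abelian-square factors. -/
import Mathlib


/-- An abelian square: a nonempty word that is the concatenation of two words
with the same Parikh vector. -/
def IsAbelianSquare {A : Type*} [DecidableEq A] (w : List A) : Prop :=
  w ≠ [] ∧ ∃ u v : List A, w = u ++ v ∧ u.length = v.length ∧
    ∀ c, u.count c = v.count c

lemma occ_lt {A : Type*} (u : List A) (hu : u ≠ []) (k : ℕ) :
    ∀ s v t : List A, s ++ (v ++ t) = (List.replicate k u).flatten →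
      ∃ p < u.length, v <+: ((List.replicate k u).flatten).drop p := by
  have hm : 0 < u.length := List.length_pos_iff.2 hu
  suffices h : ∀ n, ∀ (k : ℕ) (s v t : List A), s.length = n →
      s ++ (v ++ t) = (List.replicate k u).flatten →
      ∃ p < u.length, v <+: ((List.replicate k u).flatten).drop p by
    intro s v t hst; exact h s.length k s v t rfl hst
  intro n
  induction n using Nat.strong_induction_on with
  | _ n ih =>
    intro k s v t hlen heq
    by_cases hs : s.length < u.length
    · refine ⟨s.length, hs, t, ?_⟩
      rw [← heq, List.drop_left]
    · push_neg at hs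
      -- k ≥ 1
      have hk1 : 1 ≤ k := by
        by_contra hk0
        interval_cases k
        have hlen0 : s.length + (v.length + t.length) = 0 := by
          simpa using congrArg List.length heq
        omega
      obtain ⟨k', rfl⟩ : ∃ k', k = k' + 1 := ⟨k - 1, by omega⟩
      have hrep : (List.replicate (k' + 1) u).flatten
          = u ++ (List.replicate k' u).flatten := by
        rw [List.replicate_succ, List.flatten_cons]
      -- u <+: s
      have hupre : u <+: s := by
        have h1 : u <+: s ++ (v ++ t) := by rw [heq, hrep]; exact ⟨_, rfl⟩
        exact List.prefix_of_prefix_length_le h1 ⟨v ++ t, rfl⟩ hs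
      obtain ⟨s', rfl⟩ := hupre
      have heq' : s' ++ (v ++ t) = (List.replicate k' u).flatten := by
        rw [hrep] at heq
        simpa using heq
      have heq'' : s' ++ (v ++ (t ++ u)) = (List.replicate (k' + 1) u).flatten := by
        have : (List.replicate (k' + 1) u) = List.replicate k' u ++ [u] := by
          rw [← List.replicate_succ']
        rw [this, List.flatten_append, ← heq']
        simp
      have hlt : s'.length < n := by
        have := congrArg List.length (rfl : u ++ s' = u ++ s')
        simp at hlen
        omega
      exact ih s'.length hlt (k' + 1) s' v (t ++ u) rfl heq''

/-- A nonempty word `u^k` (of length `n = k·m`, `m = |u|`) contains at most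
`k·m² = n²/k` distinct abelian-square factors. -/
theorem stmt2 {A : Type*} [DecidableEq A] (u : List A) (hu : u ≠ []) (k : ℕ)
    (hk : 2 ≤ k) :
    {v : List A | v <:+: (List.replicate k u).flatten ∧ IsAbelianSquare v}.ncard
      ≤ k * u.length ^ 2 := by
  classical
  set m := u.length with hm
  set L := (List.replicate k u).flatten with hL
  have hLlen : L.length = k * m := by
    simp [hL, hm, Nat.mul_comm]
  have hsub : {v : List A | v <:+: L ∧ IsAbelianSquare v} ⊆
      ↑((Finset.range m ×ˢ Finset.range (k * m)).image
        (fun pl : ℕ × ℕ => (L.drop pl.1).take (pl.2 + 1))) := by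
    rintro v ⟨hinf, hne, -⟩
    obtain ⟨s, t, hst⟩ := hinf
    obtain ⟨p, hp, hpre⟩ := occ_lt u hu k s v t (by simpa [List.append_assoc] using hst)
    have hv1 : 1 ≤ v.length := List.length_pos_iff.2 hne
    have hvle : v.length ≤ k * m := by
      have h := List.IsInfix.length_le ⟨s, t, hst⟩
      omega
    refine Finset.mem_coe.2 (Finset.mem_image.2 ⟨(p, v.length - 1), ?_, ?_⟩)
    · rw [Finset.mem_product]
      constructor <;> simp [Finset.mem_range] <;> omega
    · have h1 : v.length - 1 + 1 = v.length := by omega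
      simp only [h1]
      exact (List.prefix_iff_eq_take.1 hpre).symm
  calc {v : List A | v <:+: L ∧ IsAbelianSquare v}.ncard
      ≤ ((Finset.range m ×ˢ Finset.range (k * m)).image
          (fun pl : ℕ × ℕ => (L.drop pl.1).take (pl.2 + 1)) : Finset (List A)).card := by
        rw [← Set.ncard_coe_finset]
        exact Set.ncard_le_ncard hsub (Finset.finite_toSet _)
    _ ≤ (Finset.range m ×ˢ Finset.range (k * m)).card := Finset.card_image_le
    _ = m * (k * m) := by simp [Finset.card_product]
    _ = k * m ^ 2 := by ring
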